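/- For all integers K ≥ 3 and S ≥ 1, define K₁* = ⌊√(S − 3/4) + 3/2⌋, K₂* = ⌊√S + 2⌋, K₃* = ⌊√S + 1⌋, the ST-PNC inner bound D_ST(K,S) = min{ K/2, max( K₁*/2, K₂*(K₂*−2)/(2K₂*−3), (K₃*)²/(2K₃*−1) ) }, and the G-OF sum-DoF D_GOF(K,S) = min{ K, ⌊√S + 1⌋ }/2. Then D_ST(K,S) ≥ D_GOF(K,S). -/

import Mathlib

lemma half_le_sq_div_two_mul_sub_one {x : ℝ} (hx : 1 / 2 < x) :
    x / 2 ≤ x ^ 2 / (2 * x - 1) := by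
  rw [div_le_div_iff₀ two_pos (by linarith)]
  nlinarith

lemma one_le_floor_sqrt_add_one (S : ℕ) : (1 : ℝ) ≤ ⌊Real.sqrt (S : ℝ) + 1⌋ := by
  exact_mod_cast Int.le_floor.mpr (by push_cast; linarith [Real.sqrt_nonneg (S : ℝ)])

theorem STPNC_ge_GOF_general (K S : ℕ) :
    min ((K : ℝ) / 2)
      (max (((⌊Real.sqrt ((S : ℝ) - 3 / 4) + 3 / 2⌋ : ℤ) : ℝ) / 2)
        (max
          (((⌊Real.sqrt (S : ℝ) + 2⌋ : ℤ) : ℝ) * (((⌊Real.sqrt (S : ℝ) + 2⌋ : ℤ) : ℝ) - 2)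
              / (2 * ((⌊Real.sqrt (S : ℝ) + 2⌋ : ℤ) : ℝ) - 3))
          (((⌊Real.sqrt (S : ℝ) + 1⌋ : ℤ) : ℝ) ^ 2
              / (2 * ((⌊Real.sqrt (S : ℝ) + 1⌋ : ℤ) : ℝ) - 1)))) ≥
    min (K : ℝ) ((⌊Real.sqrt (S : ℝ) + 1⌋ : ℤ) : ℝ) / 2 := by
  have h_last := half_le_sq_div_two_mul_sub_one
    ((one_le_floor_sqrt_add_one S).trans_lt' (by norm_num))
  rw [ge_iff_le, ← min_div_div_right two_pos.le]
  exact min_le_min le_rfl (h_last.trans ((le_max_right _ _).trans (le_max_right _ _)))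

/-- ST-PNC dominates G-OF (Section IV-B): for all integers `K ≥ 3` and `S ≥ 1`,
the ST-PNC inner bound of Theorem 3 is at least the G-OF sum-DoF of Lemma 2. -/
theorem STPNC_ge_GOF (K S : ℕ) (hK : 3 ≤ K) (hS : 1 ≤ S) :
    min ((K : ℝ) / 2)
      (max (((⌊Real.sqrt ((S : ℝ) - 3 / 4) + 3 / 2⌋ : ℤ) : ℝ) / 2)
        (max
          (((⌊Real.sqrt (S : ℝ) + 2⌋ : ℤ) : ℝ) * (((⌊Real.sqrt (S : ℝ) + 2⌋ : ℤ) : ℝ) - 2)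
              / (2 * ((⌊Real.sqrt (S : ℝ) + 2⌋ : ℤ) : ℝ) - 3))
          (((⌊Real.sqrt (S : ℝ) + 1⌋ : ℤ) : ℝ) ^ 2
              / (2 * ((⌊Real.sqrt (S : ℝ) + 1⌋ : ℤ) : ℝ) - 1)))) ≥
    min (K : ℝ) ((⌊Real.sqrt (S : ℝ) + 1⌋ : ℤ) : ℝ) / 2 :=
  STPNC_ge_GOF_general K S
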